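/- arXiv:1502.07823 — 4 statements merged into one kernel-verified Lean document; each statement's English description precedes it below -/
import Mathlib

section
/- In a stable matching instance with strict preferences, the set of agents who are unmatched is the same in every stable matching. -/
open List

/-- A stable-matching instance: each agent has a strict preference order
(a duplicate-free list, earlier = more preferred) over a subset of the other side. -/
structure SMInstance (M W : Type*) where
  mpref : M → List W
  wpref : W → List M
  mnodup : ∀ m, (mpref m).Nodup
  wnodup : ∀ w, (wpref w).Nodup

/-- A matching: a pairing of men and women (agents may be unmatched),
involutive on matched pairs. -/
structure Matching (M W : Type*) where
  μm : M → Option W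
  μw : W → Option M
  consistent : ∀ m w, μm m = some w ↔ μw w = some m

section Defs

variable {M W : Type*} [DecidableEq M] [DecidableEq W]

/-- Man `m` strictly prefers woman `w` to the (possibly empty) assignment `o`. -/
def SMInstance.mPref (I : SMInstance M W) (m : M) (w : W) : Option W → Prop
  | some w' => w ∈ I.mpref m ∧ (w' ∉ I.mpref m ∨ (I.mpref m).idxOf w < (I.mpref m).idxOf w')
  | none => w ∈ I.mpref m

/-- Woman `w` strictly prefers man `m` to the (possibly empty) assignment `o`. -/
def SMInstance.wPref (I : SMInstance M W) (w : W) (m : M) : Option M → Prop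
  | some m' => m ∈ I.wpref w ∧ (m' ∉ I.wpref w ∨ (I.wpref w).idxOf m < (I.wpref w).idxOf m')
  | none => m ∈ I.wpref w

/-- Man `m` weakly prefers assignment `o₁` to assignment `o₂`. -/
def SMInstance.mWeak (I : SMInstance M W) (m : M) (o₁ o₂ : Option W) : Prop :=
  o₁ = o₂ ∨ ∃ w, o₁ = some w ∧ I.mPref m w o₂

/-- Woman `w` weakly prefers assignment `o₁` to assignment `o₂`. -/
def SMInstance.wWeak (I : SMInstance M W) (w : W) (o₁ o₂ : Option M) : Prop :=
  o₁ = o₂ ∨ ∃ m, o₁ = some m ∧ I.wPref w m o₂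

def IndivRational (I : SMInstance M W) (μ : Matching M W) : Prop :=
  ∀ m w, μ.μm m = some w → w ∈ I.mpref m ∧ m ∈ I.wpref w

def BlockingPair (I : SMInstance M W) (μ : Matching M W) (m : M) (w : W) : Prop :=
  μ.μm m ≠ some w ∧ I.mPref m w (μ.μm m) ∧ I.wPref w m (μ.μw w)

def IsStable (I : SMInstance M W) (μ : Matching M W) : Prop :=
  IndivRational I μ ∧ ∀ m w, ¬ BlockingPair I μ m w

/-- The men-optimal stable matching (= output of men-proposing Gale–Shapley). -/
def IsMenOptimal (I : SMInstance M W) (μ : Matching M W) : Prop :=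
  IsStable I μ ∧ ∀ μ', IsStable I μ' → ∀ m, I.mWeak m (μ.μm m) (μ'.μm m)

/-- The women-optimal stable matching. -/
def IsWomenOptimal (I : SMInstance M W) (μ : Matching M W) : Prop :=
  IsStable I μ ∧ ∀ μ', IsStable I μ' → ∀ w, I.wWeak w (μ.μw w) (μ'.μw w)

/-- `I'` arises from `I` by arbitrary misreports of the women in `L`
(all men and all women outside `L` are truthful). -/
def GeneralManip (I I' : SMInstance M W) (L : Set W) : Prop :=
  I'.mpref = I.mpref ∧ ∀ w ∉ L, I'.wpref w = I.wpref w

/-- `I'` arises from `I` by truncation (prefix) misreports of the women in `L`. -/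
def TruncManip (I I' : SMInstance M W) (L : Set W) : Prop :=
  GeneralManip I I' L ∧ ∀ w ∈ L, (I'.wpref w) <+: (I.wpref w)

/-- `I'` arises from `I` by permutation misreports of the women in `L`. -/
def PermManip (I I' : SMInstance M W) (L : Set W) : Prop :=
  GeneralManip I I' L ∧ ∀ w ∈ L, (I'.wpref w).Perm (I.wpref w)

/-- Woman `w` is strictly better off in `μ₁` than in `μ₂` (true preferences). -/
def wStrictBetter (I : SMInstance M W) (w : W) (μ₁ μ₂ : Matching M W) : Prop :=
  ∃ m, μ₁.μw w = some m ∧ I.wPref w m (μ₂.μw w)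

/-- The set `δ(w)` of suitors of `w` at matching `μ`: the men who prefer `w`
to their own partner in `μ`. -/
def suitorSet (I : SMInstance M W) (μ : Matching M W) (w : W) : Set M :=
  {m | I.mPref m w (μ.μm m)}

/-- The suitor graph of Kobayashi–Matsui, on vertices `M ⊕ W ⊕ {s}`. -/
inductive SuitorEdge (I : SMInstance M W) (L : Set W) (μ : Matching M W) :
    M ⊕ W ⊕ Unit → M ⊕ W ⊕ Unit → Prop
  | partner_wm (w : W) (m : M) : μ.μw w = some m →
      SuitorEdge I L μ (Sum.inr (Sum.inl w)) (Sum.inl m)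
  | partner_mw (w : W) (m : M) : μ.μw w = some m →
      SuitorEdge I L μ (Sum.inl m) (Sum.inr (Sum.inl w))
  | suitor_manip (w : W) (m : M) : w ∈ L → m ∈ suitorSet I μ w →
      SuitorEdge I L μ (Sum.inl m) (Sum.inr (Sum.inl w))
  | suitor_honest (w : W) (m : M) : w ∉ L → m ∈ suitorSet I μ w →
      (∀ m' ∈ suitorSet I μ w, m' ≠ m → (I.wpref w).idxOf m < (I.wpref w).idxOf m') →
      SuitorEdge I L μ (Sum.inl m) (Sum.inr (Sum.inl w))
  | fromSource (w : W) : suitorSet I μ w = ∅ →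
      SuitorEdge I L μ (Sum.inr (Sum.inr ())) (Sum.inr (Sum.inl w))

/-- Reachability in the suitor graph. -/
abbrev SReach (I : SMInstance M W) (L : Set W) (μ : Matching M W) :
    (M ⊕ W ⊕ Unit) → (M ⊕ W ⊕ Unit) → Prop :=
  Relation.ReflTransGen (SuitorEdge I L μ)

/-- A reduced table (shortlists) for instance `I`: sublists of the true lists,
with mutual membership, where each man is engaged to the head of his reduced list,
each woman to the last man of hers, and every removed man is worse for the woman
than her current partner. -/
structure ReducedTable (I : SMInstance M W) where
  rm : M → List W
  rw : W → List M
  rmSub : ∀ m, (rm m).Sublist (I.mpref m)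
  rwSub : ∀ w, (rw w).Sublist (I.wpref w)
  mem_iff : ∀ m w, w ∈ rm m ↔ m ∈ rw w
  engaged : ∀ m w, (rm m).head? = some w ↔ (rw w).getLast? = some m
  removed_worse : ∀ m w p, m ∈ I.wpref w → m ∉ rw w → (rw w).getLast? = some p →
      (I.wpref w).idxOf p < (I.wpref w).idxOf m

/-- A rotation: a cyclic sequence of (distinct) men `m₀,…,m_{r-1}`
together with their current partners `w₀,…,w_{r-1}`. -/
structure Rot (M W : Type*) where
  r : ℕ
  hr : 2 ≤ r
  ms : Fin r → M
  ws : Fin r → W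
  inj : Function.Injective ms

/-- Cyclic successor of an index of a rotation. -/
def Rot.nxt (R : Rot M W) (i : Fin R.r) : Fin R.r :=
  ⟨((i : ℕ) + 1) % R.r, Nat.mod_lt _ (by have := R.hr; omega)⟩

/-- The reduced list of woman `w` determined by the stable matching `μ`:
the men weakly preferred to her current partner. -/
def reducedListW (I : SMInstance M W) (μ : Matching M W) (w : W) : List M :=
  match μ.μw w with
  | some p => (I.wpref w).filter (fun m => decide ((I.wpref w).idxOf m ≤ (I.wpref w).idxOf p))
  | none => []

/-- The reduced list of man `m` determined by the stable matching `μ`. -/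
def reducedListM (I : SMInstance M W) (μ : Matching M W) (m : M) : List W :=
  (I.mpref m).filter (fun w => decide (m ∈ reducedListW I μ w))

/-- The rotation `R` is exposed in (the reduced table of) the matching `μ`:
`w_i` is first and `w_{i+1}` second on `m_i`'s reduced list. -/
def Exposed (I : SMInstance M W) (μ : Matching M W) (R : Rot M W) : Prop :=
  ∀ i, (reducedListM I μ (R.ms i)).head? = some (R.ws i) ∧
       (reducedListM I μ (R.ms i))[1]? = some (R.ws (R.nxt i))

/-- `μ'` is the matching obtained from `μ` by eliminating the rotation `R`:
each `m_i` is now matched with `w_{i+1}`, everyone else is unchanged. -/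
def ElimStep (R : Rot M W) (μ μ' : Matching M W) : Prop :=
  (∀ i, μ'.μm (R.ms i) = some (R.ws (R.nxt i))) ∧
  ∀ m, (∀ i, m ≠ R.ms i) → μ'.μm m = μ.μm m

/-- `ElimSeq I μ S μ'`: the matching `μ'` is obtained from `μ` by successively
eliminating the (exposed-at-the-time) rotations of the set `S`. -/
inductive ElimSeq (I : SMInstance M W) : Matching M W → Set (Rot M W) → Matching M W → Prop
  | refl (μ : Matching M W) : ElimSeq I μ ∅ μ
  | step {μ μ' μ'' : Matching M W} {R : Rot M W} {S : Set (Rot M W)} :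
      Exposed I μ R → ElimStep R μ μ' → ElimSeq I μ' S μ'' → ElimSeq I μ (insert R S) μ''

/-- The rotation `R` moves man `m` from woman `w` to woman `w'`. -/
def Moves (R : Rot M W) (m : M) (w w' : W) : Prop :=
  ∃ i, R.ms i = m ∧ R.ws i = w ∧ R.ws (R.nxt i) = w'

/-- `R₁` explicitly precedes `R₂`: they share a man `m` such that `R₁` moves `m`
to some woman `w` and `R₂` moves `m` away from `w`. -/
def ExplicitPrec (R₁ R₂ : Rot M W) : Prop :=
  ∃ m w w₁ w₂, Moves R₁ m w₁ w ∧ Moves R₂ m w w₂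

/-- The precedence relation `≺`: transitive closure of explicit precedence. -/
def Prec (R₁ R₂ : Rot M W) : Prop :=
  Relation.TransGen ExplicitPrec R₁ R₂

/-- `R` is a rotation of the instance `I`: it is exposed at some matching
obtained from the men-optimal matching by eliminating rotations. -/
def IsRotOf (I : SMInstance M W) (R : Rot M W) : Prop :=
  ∃ μ0 S μ', IsMenOptimal I μ0 ∧ ElimSeq I μ0 S μ' ∧ Exposed I μ' R

/-- A closed (downward-closed under `≺`) set of rotations of the instance `I`. -/
def IsClosedSet (I : SMInstance M W) (𝓡 : Set (Rot M W)) : Prop :=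
  (∀ R ∈ 𝓡, IsRotOf I R) ∧ ∀ R ∈ 𝓡, ∀ R', IsRotOf I R' → Prec R' R → R' ∈ 𝓡

/-- The closed set `𝓡` can be eliminated: the matching obtained by eliminating it
is stable w.r.t. the true profile and is the men-optimal stable matching of some
profile in which only the women of `L` misreport. -/
def CanEliminate (I : SMInstance M W) (L : Set W) (𝓡 : Set (Rot M W)) : Prop :=
  ∃ μ0 μ', IsMenOptimal I μ0 ∧ ElimSeq I μ0 𝓡 μ' ∧ IsStable I μ' ∧
    ∃ I', GeneralManip I I' L ∧ IsMenOptimal I' μ'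

/-- `R` is a maximal rotation of the set `𝓡`. -/
def MaxRot (𝓡 : Set (Rot M W)) (R : Rot M W) : Prop :=
  R ∈ 𝓡 ∧ ∀ R' ∈ 𝓡, ¬ Prec R R'

/-- Whether man `m` proposes to woman `w` in the men-proposing Gale–Shapley run
whose outcome is `μ` (he proposes to every woman he weakly prefers to his final partner). -/
def proposedToB (I : SMInstance M W) (μ : Matching M W) (m : M) (w : W) : Bool :=
  decide (w ∈ I.mpref m) &&
    (match μ.μm m with
     | none => true
     | some w' => decide ((I.mpref m).idxOf w ≤ (I.mpref m).idxOf w'))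

/-- The proposal list `Pro(w)`: all men who proposed to `w`, ordered as in her stated list. -/
def proposals (I : SMInstance M W) (μ : Matching M W) (w : W) : List M :=
  (I.wpref w).filter (fun m => proposedToB I μ m w)

/-- `μ` is feasible for the permutation-manipulation game of coalition `L`. -/
def FeasibleM (I : SMInstance M W) (L : Set W) (μ : Matching M W) : Prop :=
  IsStable I μ ∧ ∃ I', PermManip I I' L ∧ IsMenOptimal I' μ

/-- `μ` is Pareto-optimal among feasible matchings (for the women). -/
def ParetoOptimal (I : SMInstance M W) (L : Set W) (μ : Matching M W) : Prop :=
  FeasibleM I L μ ∧ ¬∃ μ', FeasibleM I L μ' ∧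
    (∀ w, I.wWeak w (μ'.μw w) (μ.μw w)) ∧ (∃ w, wStrictBetter I w μ' μ)

/-- The reported profile `I'` with induced matching `μ` is a super-strong Nash
equilibrium of the permutation-manipulation game under the feasibility assumption. -/
def SuperStrongNE (I : SMInstance M W) (L : Set W) (I' : SMInstance M W)
    (μ : Matching M W) : Prop :=
  PermManip I I' L ∧ IsMenOptimal I' μ ∧ IsStable I μ ∧
  ∀ (Ls : Set W), Ls ⊆ L → ∀ I'' μ'',
    PermManip I I'' L → (∀ w ∉ Ls, I''.wpref w = I'.wpref w) →
    IsMenOptimal I'' μ'' → IsStable I μ'' →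
    ¬((∀ l ∈ Ls, I.wWeak l (μ''.μw l) (μ.μw l)) ∧ ∃ l ∈ Ls, wStrictBetter I l μ'' μ)

end Defs

/-!
If a man `m` is matched in `μ₁` but not in `μ₂`, he prefers his `μ₁`-partner to his
`μ₂`-partner. Stability of both matchings shows that whenever a man prefers his `μ₁`-partner
`w` to his `μ₂`-partner, `w` is `μ₂`-matched to another man with the same property. Sending
each such man to the `μ₂`-partner of his `μ₁`-partner is injective, hence (by finiteness)
surjective on this set of men, so every one of them — `m` included — is matched in `μ₂`.
The statement for women follows by exchanging the two sides.
-/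

namespace SMInstance

variable {M W : Type*}

/-- `I.swap.mPref` unfolds to `I.wPref`, so lemmas about men's preferences apply to women. -/
def swap (I : SMInstance M W) : SMInstance W M :=
  ⟨I.wpref, I.mpref, I.wnodup, I.mnodup⟩

variable [DecidableEq W] {I : SMInstance M W} {m : M} {w w' : W} {o : Option W}

theorem not_mPref_self : ¬ I.mPref m w (some w) := by
  simp [mPref]

theorem ne_none_of_not_mPref (hw : w ∈ I.mpref m) (h : ¬ I.mPref m w o) : o ≠ none := by
  rintro rfl
  exact h hw

theorem mPref_of_not_mPref (hw : w ∈ I.mpref m) (h : ¬ I.mPref m w (some w'))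
    (hne : w' ≠ w) : I.mPref m w' (some w) := by
  simp only [mPref, not_and, not_or, not_not, not_lt] at h
  obtain ⟨hw', hle⟩ := h hw
  exact ⟨hw', Or.inr (lt_of_le_of_ne hle fun h => hne ((List.idxOf_inj hw').mp h))⟩

end SMInstance

namespace Matching

variable {M W : Type*}

def swap (μ : Matching M W) : Matching W M :=
  ⟨μ.μw, μ.μm, fun w m => (μ.consistent m w).symm⟩

theorem eq_of_μm_eq_some (μ : Matching M W) {m m' : M} {w : W}
    (h : μ.μm m = some w) (h' : μ.μm m' = some w) : m = m' :=
  Option.some_inj.mp (((μ.consistent m w).mp h).symm.trans ((μ.consistent m' w).mp h'))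

end Matching

section Stable

variable {M W : Type*} [DecidableEq M] [DecidableEq W] {I : SMInstance M W}
  {μ μ₁ μ₂ : Matching M W}

theorem IsStable.swap (h : IsStable I μ) : IsStable I.swap μ.swap := by
  obtain ⟨hir, hnb⟩ := h
  refine ⟨fun w m hwm => (hir m w ((μ.consistent m w).mpr hwm)).symm, ?_⟩
  rintro w m ⟨hne, hw, hm⟩
  exact hnb m w ⟨fun h => hne ((μ.consistent m w).mp h), hm, hw⟩

def PrefersFirst (I : SMInstance M W) (μ₁ μ₂ : Matching M W) (m : M) : Prop :=
  ∃ w, μ₁.μm m = some w ∧ I.mPref m w (μ₂.μm m)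

/-- Woman `w` would block `μ₂` with her `μ₁`-partner `m` unless she holds a better man `m'`,
who in turn would block `μ₁` with `w` unless he holds a better woman there. -/
theorem IsStable.exists_μw_prefersFirst (h₁ : IsStable I μ₁) (h₂ : IsStable I μ₂) {m : M}
    {w : W} (hm : μ₁.μm m = some w) (hpref : I.mPref m w (μ₂.μm m)) :
    ∃ m', μ₂.μw w = some m' ∧ PrefersFirst I μ₁ μ₂ m' := by
  obtain ⟨-, hmw⟩ := h₁.1 m w hm
  have hne₂ : μ₂.μm m ≠ some w := fun h => SMInstance.not_mPref_self (h ▸ hpref)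
  have hw_no_block : ¬ I.wPref w m (μ₂.μw w) := fun h => h₂.2 m w ⟨hne₂, hpref, h⟩
  obtain ⟨m', hm'⟩ := Option.ne_none_iff_exists'.mp
    (SMInstance.ne_none_of_not_mPref (I := I.swap) hmw hw_no_block)
  have hm'w : μ₂.μm m' = some w := (μ₂.consistent m' w).mpr hm'
  have hm'm : m' ≠ m := fun h => hne₂ (h ▸ hm'w)
  have hw_prefers : I.wPref w m' (μ₁.μw w) := by
    rw [(μ₁.consistent m w).mp hm]
    rw [hm'] at hw_no_block
    exact SMInstance.mPref_of_not_mPref (I := I.swap) hmw hw_no_block hm'm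
  have hne₁ : μ₁.μm m' ≠ some w := fun h => hm'm (μ₁.eq_of_μm_eq_some h hm)
  have hm'_no_block : ¬ I.mPref m' w (μ₁.μm m') := fun h => h₁.2 m' w ⟨hne₁, h, hw_prefers⟩
  obtain ⟨hwm', -⟩ := h₂.1 m' w hm'w
  obtain ⟨w', hw'⟩ := Option.ne_none_iff_exists'.mp
    (SMInstance.ne_none_of_not_mPref hwm' hm'_no_block)
  rw [hw'] at hm'_no_block
  refine ⟨m', hm', w', hw', ?_⟩
  rw [hm'w]
  exact SMInstance.mPref_of_not_mPref hwm' hm'_no_block fun h => hne₁ (h ▸ hw')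

theorem IsStable.μm_ne_none_of_prefersFirst [Finite M] (h₁ : IsStable I μ₁)
    (h₂ : IsStable I μ₂) {m : M} (hm : PrefersFirst I μ₁ μ₂ m) : μ₂.μm m ≠ none := by
  have step : ∀ x : {m // PrefersFirst I μ₁ μ₂ m}, ∃ y : {m // PrefersFirst I μ₁ μ₂ m},
      ∃ w, μ₁.μm x = some w ∧ μ₂.μm y = some w := by
    rintro ⟨x, w, hxw, hpref⟩
    obtain ⟨y, hyw, hy⟩ := h₁.exists_μw_prefersFirst h₂ hxw hpref
    exact ⟨⟨y, hy⟩, w, hxw, (μ₂.consistent y w).mpr hyw⟩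
  choose g w hg₁ hg₂ using step
  have hg : Function.Injective g := by
    intro x y hxy
    have hw : w x = w y :=
      Option.some_inj.mp ((hg₂ x).symm.trans (hxy ▸ hg₂ y))
    exact Subtype.ext (μ₁.eq_of_μm_eq_some (hg₁ x) (hw ▸ hg₁ y))
  obtain ⟨x, hx⟩ := Finite.surjective_of_injective hg ⟨m, hm⟩
  have hmx : μ₂.μm m = some (w x) := by simpa [hx] using hg₂ x
  exact hmx ▸ Option.some_ne_none _

theorem IsStable.μm_eq_none_of_μm_eq_none [Finite M] (h₁ : IsStable I μ₁)
    (h₂ : IsStable I μ₂) {m : M} (hm : μ₂.μm m = none) : μ₁.μm m = none := by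
  by_contra hne
  obtain ⟨w, hw⟩ := Option.ne_none_iff_exists'.mp hne
  have hpref : PrefersFirst I μ₁ μ₂ m := ⟨w, hw, hm ▸ (h₁.1 m w hw).1⟩
  exact h₁.μm_ne_none_of_prefersFirst h₂ hpref hm

end Stable

/-- In a stable matching instance with strict preferences, the set of
agents who are unmatched is the same in every stable matching. -/
theorem unmatched_agents_same {M W : Type*} [DecidableEq M] [DecidableEq W]
    [Fintype M] [Fintype W] (I : SMInstance M W) (μ₁ μ₂ : Matching M W)
    (h₁ : IsStable I μ₁) (h₂ : IsStable I μ₂) :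
    (∀ m, μ₁.μm m = none ↔ μ₂.μm m = none) ∧
    (∀ w, μ₁.μw w = none ↔ μ₂.μw w = none) :=
  ⟨fun _ => ⟨h₂.μm_eq_none_of_μm_eq_none h₁, h₁.μm_eq_none_of_μm_eq_none h₂⟩,
    fun _ => ⟨h₂.swap.μm_eq_none_of_μm_eq_none h₁.swap,
      h₁.swap.μm_eq_none_of_μm_eq_none h₂.swap⟩⟩
end

section
/- If μ and μ' are stable matchings for a stable matching instance with strict preferences, then the function μ∨μ' that assigns to each man his more preferred partner among μ(m) and μ'(m) (and to each woman the corresponding partner) is a well-defined matching, and it is stable. -/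
open List

/-! Preferences are encoded by ranks in ℕ, so that strict preference is `<`. The join gives every
man the better of his two partners. No woman `w` gets two men: if she is `m₁`'s partner in `μ` and
`m₂`'s in `μ'`, and both men weakly prefer her, stability of `μ'` makes her rank `m₂` above `m₁`
and stability of `μ` the reverse. If `(m, w)` blocked the join, `m` would prefer `w` to both his
partners, so by stability `w` weakly prefers both of hers to `m`; her partner in the join is one of
these, unless she is unmatched in the join while matched in `μ'`. That is excluded by counting:
`m ↦ μ'(μ(m))` maps the finite set of men strictly preferring `μ` injectively into itself, hence
onto it, and `w`'s `μ'`-partner either gets `w` in the join or lies in that set. -/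

section PrefRank

variable {α : Type*} [DecidableEq α]

/-- Being unmatched ranks like an unacceptable partner, at `l.length`; with this convention
"strictly prefers" becomes `<` of ranks (`SMInstance.mPref_iff`). -/
def prefRank (l : List α) : Option α → ℕ
  | some a => l.idxOf a
  | none => l.length

theorem prefRank_le_length (l : List α) : ∀ o, prefRank l o ≤ l.length
  | some _ => idxOf_le_length
  | none => le_rfl

theorem prefRank_some_lt_length_iff {l : List α} {a : α} :
    prefRank l (some a) < l.length ↔ a ∈ l :=
  idxOf_lt_length_iff

theorem eq_some_of_prefRank_eq {l : List α} {a : α} (ha : a ∈ l) :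
    ∀ {o : Option α}, prefRank l o = prefRank l (some a) → o = some a
  | some _, h => congrArg some ((idxOf_inj ha).1 h.symm).symm
  | none, h => absurd (h ▸ prefRank_some_lt_length_iff.2 ha) (lt_irrefl _)

theorem prefRank_ne_of_ne {l : List α} {a : α} (ha : a ∈ l) {o : Option α} (hne : o ≠ some a) :
    prefRank l o ≠ prefRank l (some a) :=
  fun e => hne (eq_some_of_prefRank_eq ha e)

theorem exists_eq_some_of_prefRank_lt_length {l : List α} :
    ∀ {o : Option α}, prefRank l o < l.length → ∃ a, o = some a
  | some a, _ => ⟨a, rfl⟩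
  | none, h => absurd h (lt_irrefl _)

theorem mem_and_not_mem_or_idxOf_lt_iff {l : List α} {a b : α} :
    (a ∈ l ∧ (b ∉ l ∨ l.idxOf a < l.idxOf b)) ↔ l.idxOf a < l.idxOf b := by
  refine ⟨?_, fun h => ⟨idxOf_lt_length_iff.1 (h.trans_le idxOf_le_length), Or.inr h⟩⟩
  rintro ⟨ha, hb | h⟩
  · rw [idxOf_eq_length_iff.2 hb]
    exact idxOf_lt_length_iff.2 ha
  · exact h

end PrefRank

namespace Matching

variable {M W : Type*} (μ : Matching M W)

theorem eq_of_μm_eq {m m' : M} {w : W} (h : μ.μm m = some w) (h' : μ.μm m' = some w) :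
    m = m' :=
  Option.some_injective _ (((μ.consistent m w).1 h).symm.trans ((μ.consistent m' w).1 h'))

theorem eq_of_μw_eq {m : M} {w w' : W} (h : μ.μw w = some m) (h' : μ.μw w' = some m) :
    w = w' :=
  Option.some_injective _ (((μ.consistent m w).2 h).symm.trans ((μ.consistent m w').2 h'))

open Classical in
noncomputable def ofInjective (f : M → Option W)
    (hf : ∀ {m m' w}, f m = some w → f m' = some w → m = m') : Matching M W where
  μm := f
  μw w := if h : ∃ m, f m = some w then some h.choose else none
  consistent m w := by
    constructor
    · intro hm
      have hex : ∃ m', f m' = some w := ⟨m, hm⟩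
      rw [dif_pos hex, hf hex.choose_spec hm]
    · intro hw
      split_ifs at hw with h
      obtain rfl := Option.some_inj.1 hw
      exact h.choose_spec

end Matching

theorem Set.Finite.exists_mem_eq_some_of_partialInj {α : Type*} {s : Set α} (hs : s.Finite)
    {f : α → Option α} (hmaps : ∀ a ∈ s, ∃ b ∈ s, f a = some b)
    (hinj : ∀ {a a' b}, f a = some b → f a' = some b → a = a') {b : α} (hb : b ∈ s) :
    ∃ a ∈ s, f a = some b := by
  set g : α → α := fun a => (f a).getD a
  have hfg : ∀ a ∈ s, f a = some (g a) := fun a ha => by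
    obtain ⟨b, -, e⟩ := hmaps a ha
    simp [g, e]
  have hmapsTo : Set.MapsTo g s s := fun a ha => by
    obtain ⟨b, hb, e⟩ := hmaps a ha
    simpa [g, e] using hb
  have hinjOn : Set.InjOn g s := fun a ha a' ha' e =>
    hinj (hfg a ha) (e ▸ hfg a' ha')
  obtain ⟨a, ha, rfl⟩ := ((hs.injOn_iff_bijOn_of_mapsTo hmapsTo).1 hinjOn).surjOn hb
  exact ⟨a, ha, hfg a ha⟩

namespace SMInstance

variable {M W : Type*}

abbrev mRank [DecidableEq W] (I : SMInstance M W) (m : M) : Option W → ℕ := prefRank (I.mpref m)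

abbrev wRank [DecidableEq M] (I : SMInstance M W) (w : W) : Option M → ℕ := prefRank (I.wpref w)

variable {I : SMInstance M W}

theorem mPref_iff [DecidableEq W] {m : M} {w : W} {o : Option W} :
    I.mPref m w o ↔ I.mRank m (some w) < I.mRank m o := by
  cases o <;> simp only [mPref, prefRank, mem_and_not_mem_or_idxOf_lt_iff, idxOf_lt_length_iff]

theorem wPref_iff [DecidableEq M] {w : W} {m : M} {o : Option M} :
    I.wPref w m o ↔ I.wRank w (some m) < I.wRank w o := by
  cases o <;> simp only [wPref, prefRank, mem_and_not_mem_or_idxOf_lt_iff, idxOf_lt_length_iff]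

theorem mWeak_of_mRank_le [DecidableEq W] {m : M} {o₁ o₂ : Option W}
    (h₁ : ∀ w ∈ o₁, w ∈ I.mpref m) (h₂ : ∀ w ∈ o₂, w ∈ I.mpref m)
    (h : I.mRank m o₁ ≤ I.mRank m o₂) : I.mWeak m o₁ o₂ := by
  rcases o₁ with _ | w
  · rcases o₂ with _ | w₂
    · exact Or.inl rfl
    · exact absurd h (not_le.2 (prefRank_some_lt_length_iff.2 (h₂ w₂ rfl)))
  · by_cases e : some w = o₂
    · exact Or.inl e
    · refine Or.inr ⟨w, rfl, mPref_iff.2 (lt_of_le_of_ne h ?_)⟩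
      exact (prefRank_ne_of_ne (h₁ w rfl) (Ne.symm e)).symm

end SMInstance

section Stability

variable {M W : Type*} [DecidableEq M] [DecidableEq W] {I : SMInstance M W}
  {μ μ' : Matching M W} {m : M} {w : W}

theorem IsStable.wRank_le_of_mRank_lt (h : IsStable I μ)
    (hm : I.mRank m (some w) < I.mRank m (μ.μm m)) :
    I.wRank w (μ.μw w) ≤ I.wRank w (some m) := by
  refine not_lt.1 fun hw => h.2 m w ⟨fun e => ?_, SMInstance.mPref_iff.2 hm,
    SMInstance.wPref_iff.2 hw⟩
  rw [e] at hm
  exact lt_irrefl _ hm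

theorem IsStable.mRank_le_of_wRank_lt (h : IsStable I μ)
    (hw : I.wRank w (some m) < I.wRank w (μ.μw w)) :
    I.mRank m (μ.μm m) ≤ I.mRank m (some w) :=
  not_lt.1 fun hm => (h.wRank_le_of_mRank_lt hm).not_gt hw

theorem IsStable.wRank_le_of_mRank_le (h : IsStable I μ) (hw : w ∈ I.mpref m)
    (hne : μ.μm m ≠ some w) (hm : I.mRank m (some w) ≤ I.mRank m (μ.μm m)) :
    I.wRank w (μ.μw w) ≤ I.wRank w (some m) :=
  h.wRank_le_of_mRank_lt (lt_of_le_of_ne hm (prefRank_ne_of_ne hw hne).symm)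

end Stability

section Join

variable {M W : Type*} [DecidableEq W] {I : SMInstance M W} {μ μ' : Matching M W}

variable (I μ μ') in
def menJoin (m : M) : Option W :=
  if I.mRank m (μ.μm m) ≤ I.mRank m (μ'.μm m) then μ.μm m else μ'.μm m

variable (I μ μ') in
theorem menJoin_eq_or (m : M) : menJoin I μ μ' m = μ.μm m ∨ menJoin I μ μ' m = μ'.μm m := by
  unfold menJoin
  split_ifs
  exacts [Or.inl rfl, Or.inr rfl]

variable (I μ μ') in
theorem mRank_menJoin (m : M) :
    I.mRank m (menJoin I μ μ' m) = min (I.mRank m (μ.μm m)) (I.mRank m (μ'.μm m)) := by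
  unfold menJoin
  split_ifs <;> omega

theorem menJoin_eq_some_mem (h : IndivRational I μ) (h' : IndivRational I μ') {m : M} {w : W}
    (hw : menJoin I μ μ' m = some w) : w ∈ I.mpref m ∧ m ∈ I.wpref w := by
  rcases menJoin_eq_or I μ μ' m with e | e <;> rw [e] at hw
  exacts [h m w hw, h' m w hw]

theorem mWeak_menJoin (h : IndivRational I μ) (h' : IndivRational I μ') (m : M) :
    I.mWeak m (menJoin I μ μ' m) (μ.μm m) ∧ I.mWeak m (menJoin I μ μ' m) (μ'.μm m) := by
  have hr := mRank_menJoin I μ μ' m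
  have hj : ∀ w ∈ menJoin I μ μ' m, w ∈ I.mpref m := fun _ hw => (menJoin_eq_some_mem h h' hw).1
  exact ⟨SMInstance.mWeak_of_mRank_le hj (fun w hw => (h m w hw).1) (by omega),
    SMInstance.mWeak_of_mRank_le hj (fun w hw => (h' m w hw).1) (by omega)⟩

variable (I μ μ') in
def menPreferring : Set M := {m | I.mRank m (μ.μm m) < I.mRank m (μ'.μm m)}

theorem mem_menPreferring {m : M} :
    m ∈ menPreferring I μ μ' ↔ I.mRank m (μ.μm m) < I.mRank m (μ'.μm m) :=
  Iff.rfl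

variable [DecidableEq M]

theorem eq_of_crossed_partners (h : IsStable I μ) (h' : IsStable I μ') {m₁ m₂ : M} {w : W}
    (h₁ : μ.μm m₁ = some w) (h₂ : μ'.μm m₂ = some w)
    (hr₁ : I.mRank m₁ (some w) ≤ I.mRank m₁ (μ'.μm m₁))
    (hr₂ : I.mRank m₂ (some w) ≤ I.mRank m₂ (μ.μm m₂)) : m₁ = m₂ := by
  by_contra hne
  have hle₁ := h'.wRank_le_of_mRank_le (h.1 _ _ h₁).1 (fun e => hne (μ'.eq_of_μm_eq e h₂)) hr₁
  have hle₂ := h.wRank_le_of_mRank_le (h'.1 _ _ h₂).1 (fun e => hne (μ.eq_of_μm_eq h₁ e)) hr₂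
  rw [(μ'.consistent _ _).1 h₂] at hle₁
  rw [(μ.consistent _ _).1 h₁] at hle₂
  exact hne (Option.some_inj.1 (eq_some_of_prefRank_eq (h.1 _ _ h₁).2 (le_antisymm hle₁ hle₂))).symm

theorem menJoin_inj (h : IsStable I μ) (h' : IsStable I μ') {m₁ m₂ : M} {w : W}
    (h₁ : menJoin I μ μ' m₁ = some w) (h₂ : menJoin I μ μ' m₂ = some w) : m₁ = m₂ := by
  have hr₁ := mRank_menJoin I μ μ' m₁
  have hr₂ := mRank_menJoin I μ μ' m₂
  rw [h₁] at hr₁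
  rw [h₂] at hr₂
  rcases menJoin_eq_or I μ μ' m₁ with e₁ | e₁ <;> rcases menJoin_eq_or I μ μ' m₂ with e₂ | e₂ <;>
    rw [h₁] at e₁ <;> rw [h₂] at e₂
  · exact μ.eq_of_μm_eq e₁.symm e₂.symm
  · exact eq_of_crossed_partners h h' e₁.symm e₂.symm (by omega) (by omega)
  · exact eq_of_crossed_partners h' h e₁.symm e₂.symm (by omega) (by omega)
  · exact μ'.eq_of_μm_eq e₁.symm e₂.symm

/-- The `μ`-partner `w` of `m` would block `μ'` with `m` unless her `μ'`-partner `m'` ranks above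
`m`; then `(m', w)` would block `μ` unless `m'` also prefers `μ`. -/
theorem exists_mem_menPreferring_partner (h : IsStable I μ) (h' : IsStable I μ') {m : M}
    (hm : m ∈ menPreferring I μ μ') :
    ∃ m' ∈ menPreferring I μ μ', (μ.μm m).bind μ'.μw = some m' := by
  rw [mem_menPreferring] at hm
  obtain ⟨w, hw⟩ := exists_eq_some_of_prefRank_lt_length (hm.trans_le (prefRank_le_length _ _))
  have hmw : m ∈ I.wpref w := (h.1 m w hw).2
  have hle : I.wRank w (μ'.μw w) ≤ I.wRank w (some m) :=
    h'.wRank_le_of_mRank_lt (hw ▸ hm)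
  obtain ⟨m', hm'⟩ :=
    exists_eq_some_of_prefRank_lt_length (hle.trans_lt (prefRank_some_lt_length_iff.2 hmw))
  have hμ'm' : μ'.μm m' = some w := (μ'.consistent _ _).2 hm'
  have hne : m' ≠ m := by
    rintro rfl
    rw [hw, hμ'm'] at hm
    exact lt_irrefl _ hm
  rw [hm'] at hle
  have hlt : I.wRank w (some m') < I.wRank w (μ.μw w) := by
    rw [(μ.consistent _ _).1 hw]
    exact lt_of_le_of_ne hle (prefRank_ne_of_ne hmw ((Option.some_injective _).ne hne))
  have hle' : I.mRank m' (μ.μm m') ≤ I.mRank m' (μ'.μm m') :=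
    hμ'm' ▸ h.mRank_le_of_wRank_lt hlt
  have hne' : μ.μm m' ≠ μ'.μm m' := fun e => hne (μ.eq_of_μm_eq (e.trans hμ'm') hw)
  refine ⟨m', lt_of_le_of_ne hle' ?_, by simp [hw, hm']⟩
  rw [hμ'm'] at hne' ⊢
  exact prefRank_ne_of_ne (h'.1 _ _ hμ'm').1 hne'

theorem exists_menJoin_eq_some [Finite M] (h : IsStable I μ) (h' : IsStable I μ') {w : W} {q : M}
    (hq : μ'.μw w = some q) : ∃ m, menJoin I μ μ' m = some w := by
  have hμ'q : μ'.μm q = some w := (μ'.consistent _ _).2 hq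
  by_cases hjq : menJoin I μ μ' q = some w
  · exact ⟨q, hjq⟩
  have hqS : q ∈ menPreferring I μ μ' := by
    unfold menJoin at hjq
    split_ifs at hjq with hle
    · rw [mem_menPreferring]
      rw [hμ'q] at hle ⊢
      exact lt_of_le_of_ne hle (prefRank_ne_of_ne (h'.1 _ _ hμ'q).1 hjq)
    · exact absurd hμ'q hjq
  have hinj : ∀ {a a' b}, (μ.μm a).bind μ'.μw = some b → (μ.μm a').bind μ'.μw = some b →
      a = a' := by
    intro a a' b ha ha'
    obtain ⟨x, hx, hxb⟩ := Option.bind_eq_some_iff.1 ha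
    obtain ⟨x', hx', hx'b⟩ := Option.bind_eq_some_iff.1 ha'
    exact μ.eq_of_μm_eq hx (μ'.eq_of_μw_eq hxb hx'b ▸ hx')
  obtain ⟨m, hmS, hm⟩ := (Set.toFinite _).exists_mem_eq_some_of_partialInj
    (fun _ ha => exists_mem_menPreferring_partner h h' ha) hinj hqS
  obtain ⟨x, hx, hxq⟩ := Option.bind_eq_some_iff.1 hm
  refine ⟨m, ?_⟩
  rw [menJoin, if_pos hmS.le, hx, μ'.eq_of_μw_eq hxq hq]

end Join

section JoinMatching

variable {M W : Type*} [DecidableEq M] [DecidableEq W] {I : SMInstance M W}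
  {μ μ' : Matching M W}

noncomputable def IsStable.join (h : IsStable I μ) (h' : IsStable I μ') : Matching M W :=
  Matching.ofInjective (menJoin I μ μ') (menJoin_inj h h')

theorem IsStable.join_μm (h : IsStable I μ) (h' : IsStable I μ') :
    (h.join h').μm = menJoin I μ μ' :=
  rfl

theorem IsStable.join_μw_eq_or (h : IsStable I μ) (h' : IsStable I μ') {w : W} {m : M}
    (hw : (h.join h').μw w = some m) : μ.μw w = some m ∨ μ'.μw w = some m := by
  have hm : menJoin I μ μ' m = some w := ((h.join h').consistent m w).2 hw
  rcases menJoin_eq_or I μ μ' m with e | e <;> rw [e] at hm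
  exacts [Or.inl ((μ.consistent m w).1 hm), Or.inr ((μ'.consistent m w).1 hm)]

theorem IsStable.isStable_join [Finite M] (h : IsStable I μ) (h' : IsStable I μ') :
    IsStable I (h.join h') := by
  refine ⟨fun m w hw => menJoin_eq_some_mem h.1 h'.1 hw, fun m w ⟨_, hm, hw⟩ => ?_⟩
  rw [SMInstance.mPref_iff, h.join_μm] at hm
  rw [SMInstance.wPref_iff] at hw
  have hr := mRank_menJoin I μ μ' m
  have hle := h.wRank_le_of_mRank_lt (show I.mRank m (some w) < I.mRank m (μ.μm m) by omega)
  have hle' := h'.wRank_le_of_mRank_lt (show I.mRank m (some w) < I.mRank m (μ'.μm m) by omega)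
  obtain ⟨q, hq⟩ := exists_eq_some_of_prefRank_lt_length
    (hle'.trans_lt (hw.trans_le (prefRank_le_length _ _)))
  obtain ⟨m₀, hm₀⟩ := exists_menJoin_eq_some h h' hq
  have e := ((h.join h').consistent m₀ w).1 hm₀
  rw [e] at hw
  rcases h.join_μw_eq_or h' e with e' | e'
  · rw [e'] at hle
    omega
  · rw [e'] at hle'
    omega

end JoinMatching

theorem conway_join_general {M W : Type*} [DecidableEq M] [DecidableEq W]
    [Fintype M] (I : SMInstance M W) (μ μ' : Matching M W)
    (h : IsStable I μ) (h' : IsStable I μ') :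
    ∃ ν : Matching M W, IsStable I ν ∧
      ∀ m, (ν.μm m = μ.μm m ∨ ν.μm m = μ'.μm m) ∧
        I.mWeak m (ν.μm m) (μ.μm m) ∧ I.mWeak m (ν.μm m) (μ'.μm m) :=
  ⟨h.join h', h.isStable_join h', fun m => ⟨menJoin_eq_or I μ μ' m, mWeak_menJoin h.1 h'.1 m⟩⟩

/-- Conway's Lattice Theorem, join part: the pointwise men-maximum
of two stable matchings is a well-defined matching and is stable. -/
theorem conway_join {M W : Type*} [DecidableEq M] [DecidableEq W]
    [Fintype M] [Fintype W] (I : SMInstance M W) (μ μ' : Matching M W)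
    (h : IsStable I μ) (h' : IsStable I μ') :
    ∃ ν : Matching M W, IsStable I ν ∧
      ∀ m, (ν.μm m = μ.μm m ∨ ν.μm m = μ'.μm m) ∧
        I.mWeak m (ν.μm m) (μ.μm m) ∧ I.mWeak m (ν.μm m) (μ'.μm m) :=
  conway_join_general I μ μ' h h'
end

section
/- In any stable matching instance with strict preferences, all men prefer stable matching μ₁ weakly to stable matching μ₂ (pointwise) if and only if all women prefer μ₂ weakly to μ₁ (pointwise). Consequently, the men-optimal stable matching is the women-pessimal stable matching. -/
open List

/-!
If man `m` strictly prefers his `μ₁`-partner `w` to his `μ₂`-partner, then stability of `μ₂`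
forbids `w` from preferring `m` to her `μ₂`-partner; as her preferences are strict and `m` is
acceptable to her, she weakly prefers her `μ₂`-partner to `m`. The converse is the same
argument with the roles of men and women exchanged.
-/

section OppositePreferences

variable {M W : Type*}

def SMInstance.swap_s3 (I : SMInstance M W) : SMInstance W M :=
  ⟨I.wpref, I.mpref, I.wnodup, I.mnodup⟩

def Matching.swap_s3 (μ : Matching M W) : Matching W M :=
  ⟨μ.μw, μ.μm, fun w m => (μ.consistent m w).symm⟩

variable {I : SMInstance M W} {μ μ₁ μ₂ : Matching M W}

theorem SMInstance.swap_mPref [DecidableEq M] (I : SMInstance M W) (w : W) (m : M) (o : Option M) :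
    I.swap_s3.mPref w m o ↔ I.wPref w m o := by
  cases o <;> rfl

theorem SMInstance.swap_wPref [DecidableEq W] (I : SMInstance M W) (m : M) (w : W) (o : Option W) :
    I.swap_s3.wPref m w o ↔ I.mPref m w o := by
  cases o <;> rfl

theorem SMInstance.swap_mWeak [DecidableEq M] (I : SMInstance M W) (w : W) (o₁ o₂ : Option M) :
    I.swap_s3.mWeak w o₁ o₂ ↔ I.wWeak w o₁ o₂ := by
  simp only [SMInstance.mWeak, SMInstance.wWeak, SMInstance.swap_mPref]

theorem SMInstance.swap_wWeak [DecidableEq W] (I : SMInstance M W) (m : M) (o₁ o₂ : Option W) :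
    I.swap_s3.wWeak m o₁ o₂ ↔ I.mWeak m o₁ o₂ := by
  simp only [SMInstance.mWeak, SMInstance.wWeak, SMInstance.swap_wPref]

theorem IndivRational.swap_s3 (h : IndivRational I μ) : IndivRational I.swap_s3 μ.swap_s3 :=
  fun w m hwm => (h m w ((μ.consistent m w).mpr hwm)).symm

theorem IsStable.swap_s3 [DecidableEq M] [DecidableEq W] (h : IsStable I μ) :
    IsStable I.swap_s3 μ.swap_s3 :=
  ⟨h.1.swap_s3, fun w m ⟨hne, hw, hm⟩ => h.2 m w
    ⟨fun hmw => hne ((μ.consistent m w).mp hmw), (I.swap_wPref m w _).mp hm,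
      (I.swap_mPref w m _).mp hw⟩⟩

theorem IndivRational.mem_wpref (h : IndivRational I μ) {m : M} {w : W}
    (hw : μ.μw w = some m) : m ∈ I.wpref w :=
  (h m w ((μ.consistent m w).mpr hw)).2

theorem SMInstance.mPref_of_mWeak_some [DecidableEq W] {m : M} {w : W} {o : Option W}
    (h : I.mWeak m (some w) o) (hne : o ≠ some w) : I.mPref m w o := by
  rcases h with h | ⟨w', hw', hpref⟩
  · exact absurd h.symm hne
  · cases Option.some_injective _ hw'
    exact hpref

theorem SMInstance.wWeak_some_of_not_wPref [DecidableEq M] {w : W} {m : M} {o : Option M}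
    (hm : m ∈ I.wpref w) (ho : ∀ m', o = some m' → m' ∈ I.wpref w) (h : ¬ I.wPref w m o) :
    I.wWeak w o (some m) := by
  cases o with
  | none => exact absurd hm h
  | some m' =>
    by_cases hm' : m' = m
    · exact Or.inl (congrArg some hm')
    have hm'mem := ho m' rfl
    have hidx : (I.wpref w).idxOf m' ≠ (I.wpref w).idxOf m :=
      fun he => hm' ((List.idxOf_inj hm'mem).mp he)
    have hle : (I.wpref w).idxOf m' ≤ (I.wpref w).idxOf m :=
      not_lt.mp fun hlt => h ⟨hm, Or.inr hlt⟩
    exact Or.inr ⟨m', rfl, hm'mem, Or.inr (lt_of_le_of_ne hle hidx)⟩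

theorem wWeak_of_forall_mWeak [DecidableEq M] [DecidableEq W] (h₁ : IndivRational I μ₁)
    (h₂ : IsStable I μ₂) (hM : ∀ m, I.mWeak m (μ₁.μm m) (μ₂.μm m)) (w : W) :
    I.wWeak w (μ₂.μw w) (μ₁.μw w) := by
  cases h₁w : μ₁.μw w with
  | none =>
    cases h₂w : μ₂.μw w with
    | none => exact Or.inl rfl
    | some m₂ => exact Or.inr ⟨m₂, rfl, h₂.1.mem_wpref h₂w⟩
  | some m =>
    have h₁m : μ₁.μm m = some w := (μ₁.consistent m w).mpr h₁w
    by_cases h₂w : μ₂.μw w = some m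
    · exact Or.inl h₂w
    have h₂m : μ₂.μm m ≠ some w := fun h => h₂w ((μ₂.consistent m w).mp h)
    have hm_pref : I.mPref m w (μ₂.μm m) :=
      I.mPref_of_mWeak_some (h₁m ▸ hM m) h₂m
    have hw_not_pref : ¬ I.wPref w m (μ₂.μw w) := fun hw => h₂.2 m w ⟨h₂m, hm_pref, hw⟩
    exact I.wWeak_some_of_not_wPref (h₁.mem_wpref h₁w) (fun _ => h₂.1.mem_wpref) hw_not_pref

theorem mWeak_of_forall_wWeak [DecidableEq M] [DecidableEq W] (h₁ : IsStable I μ₁)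
    (h₂ : IndivRational I μ₂) (hW : ∀ w, I.wWeak w (μ₂.μw w) (μ₁.μw w)) (m : M) :
    I.mWeak m (μ₁.μm m) (μ₂.μm m) :=
  (I.swap_wWeak m _ _).mp <|
    wWeak_of_forall_mWeak h₂.swap_s3 h₁.swap_s3 (fun w => (I.swap_mWeak w _ _).mpr (hW w)) m

end OppositePreferences

theorem opposite_preferences_general {M W : Type*} [DecidableEq M] [DecidableEq W]
    (I : SMInstance M W) :
    (∀ μ₁ μ₂ : Matching M W, IsStable I μ₁ → IsStable I μ₂ →
      ((∀ m, I.mWeak m (μ₁.μm m) (μ₂.μm m)) ↔ (∀ w, I.wWeak w (μ₂.μw w) (μ₁.μw w)))) ∧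
    (∀ μ : Matching M W, IsMenOptimal I μ →
      ∀ μ', IsStable I μ' → ∀ w, I.wWeak w (μ'.μw w) (μ.μw w)) :=
  ⟨fun _ _ h₁ h₂ => ⟨wWeak_of_forall_mWeak h₁.1 h₂, mWeak_of_forall_wWeak h₁ h₂.1⟩,
    fun _ hμ μ' hμ' => wWeak_of_forall_mWeak hμ.1.1 hμ' (hμ.2 μ' hμ')⟩

/-- men and women have strictly opposite preferences over stable
matchings; consequently the men-optimal stable matching is women-pessimal. -/
theorem opposite_preferences {M W : Type*} [DecidableEq M] [DecidableEq W]
    [Fintype M] [Fintype W] (I : SMInstance M W) :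
    (∀ μ₁ μ₂ : Matching M W, IsStable I μ₁ → IsStable I μ₂ →
      ((∀ m, I.mWeak m (μ₁.μm m) (μ₂.μm m)) ↔ (∀ w, I.wWeak w (μ₂.μw w) (μ₁.μw w)))) ∧
    (∀ μ : Matching M W, IsMenOptimal I μ →
      ∀ μ', IsStable I μ' → ∀ w, I.wWeak w (μ'.μw w) (μ.μw w)) :=
  opposite_preferences_general I
end

section
/- Let each manipulator in a set L of women truncate her true preference list by deleting every man ranked strictly below her women-optimal stable partner (under the true profile), while all other agents report truthfully. Then in the men-proposing Gale-Shapley outcome of the reported profile, every manipulator is matched to her women-optimal stable partner (with respect to the true profile). -/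
open List

/-! Truncating each manipulator's list just below her `μW`-partner keeps `μW` stable, since a
pair blocking it for the shortened lists also blocks it for the true ones. So every man does
at least as well in the men-optimal matching `μ'` of the reported profile as in `μW`, and then
no woman can strictly prefer (by her true list) her `μ'`-partner to her `μW`-partner, as the
two would block `μW`. Hence the women matched in `μ'` are matched in `μW`, the men matched in
`μW` are matched in `μ'`, and counting shows that the same women are matched in both. A
manipulator's `μ'`-partner is on her truncated list, so he is weakly better than her
`μW`-partner, and therefore equal to him. -/

namespace Matching

variable {M W : Type*}

theorem μm_get_μw (μ : Matching M W) {w : W} (h : (μ.μw w).isSome) :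
    μ.μm ((μ.μw w).get h) = some w :=
  (μ.consistent _ w).mpr (Option.some_get h).symm

theorem μw_get_μm (μ : Matching M W) {m : M} (h : (μ.μm m).isSome) :
    μ.μw ((μ.μm m).get h) = some m :=
  (μ.consistent m _).mp (Option.some_get h).symm

def matchedEquiv (μ : Matching M W) :
    {w // (μ.μw w).isSome} ≃ {m // (μ.μm m).isSome} where
  toFun w := ⟨(μ.μw w.1).get w.2, by simp [μm_get_μw]⟩
  invFun m := ⟨(μ.μm m.1).get m.2, by simp [μw_get_μm]⟩
  left_inv w := by ext; simp [μm_get_μw]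
  right_inv m := by ext; simp [μw_get_μm]

theorem ncard_matched_women (μ : Matching M W) :
    {w | (μ.μw w).isSome}.ncard = {m | (μ.μm m).isSome}.ncard :=
  Nat.card_congr μ.matchedEquiv

/-- A counting form of the rural hospitals theorem. -/
theorem isSome_μw_of_subset [Finite M] [Finite W] {μ μ' : Matching M W}
    (hW : ∀ w, (μ'.μw w).isSome → (μ.μw w).isSome)
    (hM : ∀ m, (μ.μm m).isSome → (μ'.μm m).isSome)
    {w : W} (hw : (μ.μw w).isSome) : (μ'.μw w).isSome := by
  have hcard : {w | (μ.μw w).isSome}.ncard ≤ {w | (μ'.μw w).isSome}.ncard := by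
    rw [ncard_matched_women, ncard_matched_women]
    exact Set.ncard_le_ncard hM
  exact (Set.ext_iff.mp (Set.eq_of_subset_of_ncard_le hW hcard) w).mpr hw

end Matching

namespace SMInstance

variable {M W : Type*} {I I' : SMInstance M W}

theorem mPref_eq_of_mpref_eq [DecidableEq W] (h : I'.mpref = I.mpref) : I'.mPref = I.mPref := by
  funext m w o
  cases o <;> simp [mPref, h]

theorem mWeak_eq_of_mpref_eq [DecidableEq W] (h : I'.mpref = I.mpref) : I'.mWeak = I.mWeak := by
  funext m o₁ o₂
  simp only [mWeak, mPref_eq_of_mpref_eq h]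

theorem wPref_of_isPrefix [DecidableEq M] {w : W} {m : M} {o : Option M}
    (hpre : I'.wpref w <+: I.wpref w)
    (ho : ∀ m', o = some m' → m' ∈ I'.wpref w) (h : I'.wPref w m o) : I.wPref w m o := by
  cases o with
  | none => exact hpre.subset h
  | some m' =>
    obtain ⟨hm, hlt⟩ := h
    have hm' := ho m' rfl
    refine ⟨hpre.subset hm, Or.inr ?_⟩
    rw [← hpre.idxOf_eq_of_mem hm, ← hpre.idxOf_eq_of_mem hm']
    exact hlt.resolve_left (not_not_intro hm')

theorem wWeak_of_mem_take [DecidableEq M] {w : W} {m p : M}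
    (hp : p ∈ (I.wpref w).take ((I.wpref w).idxOf m + 1)) : I.wWeak w (some p) (some m) := by
  have hp' : p ∈ I.wpref w := mem_of_mem_take hp
  rcases (Nat.lt_succ_iff.mp ((mem_take_iff_idxOf_lt hp').mp hp)).lt_or_eq with hlt | heq
  · exact Or.inr ⟨p, rfl, hp', Or.inr hlt⟩
  · exact Or.inl (congrArg some ((idxOf_inj hp').mp heq))

end SMInstance

theorem TruncManip.wpref_isPrefix {M W : Type*} {I I' : SMInstance M W} {L : Set W}
    (hT : TruncManip I I' L) (w : W) : I'.wpref w <+: I.wpref w := by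
  by_cases hw : w ∈ L
  · exact hT.2 w hw
  · exact hT.1.2 w hw ▸ prefix_refl _

theorem IndivRational.mem_wpref_of_truncate {M W : Type*} [DecidableEq M]
    {I I' : SMInstance M W} {L : Set W} {μ : Matching M W} (hir : IndivRational I μ)
    (hhonest : ∀ w ∉ L, I'.wpref w = I.wpref w)
    (htrunc : ∀ w ∈ L, ∃ m, μ.μw w = some m ∧
      I'.wpref w = (I.wpref w).take ((I.wpref w).idxOf m + 1))
    (m : M) (w : W) (h : μ.μm m = some w) : m ∈ I'.wpref w := by
  have hmem := (hir m w h).2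
  by_cases hw : w ∈ L
  · obtain ⟨m', hm', htake⟩ := htrunc w hw
    obtain rfl : m = m' := Option.some_injective _ (((μ.consistent m w).mp h).symm.trans hm')
    exact htake ▸ (mem_take_iff_idxOf_lt hmem).mpr (Nat.lt_succ_self _)
  · exact (hhonest w hw).symm ▸ hmem

namespace IsStable

variable {M W : Type*} [DecidableEq M] [DecidableEq W] {I I' : SMInstance M W}
  {μ μ' : Matching M W}

theorem of_isPrefix (hs : IsStable I μ) (hm : I'.mpref = I.mpref)
    (hpre : ∀ w, I'.wpref w <+: I.wpref w) (hkeep : ∀ m w, μ.μm m = some w → m ∈ I'.wpref w) :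
    IsStable I' μ := by
  refine ⟨fun m w h => ⟨hm ▸ (hs.1 m w h).1, hkeep m w h⟩, ?_⟩
  rintro m w ⟨hne, hmw, hwm⟩
  refine hs.2 m w ⟨hne, SMInstance.mPref_eq_of_mpref_eq hm ▸ hmw, ?_⟩
  exact SMInstance.wPref_of_isPrefix (hpre w)
    (fun m' hm' => hkeep m' w ((μ.consistent m' w).mpr hm')) hwm

theorem not_wPref_of_mWeak (hs : IsStable I μ) (hweak : ∀ m, I.mWeak m (μ'.μm m) (μ.μm m))
    {p : M} {w : W} (hp : μ'.μm p = some w) : ¬ I.wPref w p (μ.μw w) := by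
  intro hwp
  by_cases hne : μ.μm p = some w
  · rw [(μ.consistent p w).mp hne] at hwp
    exact hwp.2.elim (· hwp.1) (lt_irrefl _)
  · rcases hweak p with heq | ⟨w', hw', hpw'⟩
    · exact hne (heq ▸ hp)
    · rw [Option.some_injective _ (hw'.symm.trans hp)] at hpw'
      exact hs.2 p w ⟨hne, hpw', hwp⟩

theorem isSome_μw_of_mWeak [Finite M] [Finite W] (hs : IsStable I μ)
    (hweak : ∀ m, I.mWeak m (μ'.μm m) (μ.μm m))
    (hacc : ∀ m w, μ'.μm m = some w → m ∈ I.wpref w) {w : W} (hw : (μ.μw w).isSome) :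
    (μ'.μw w).isSome := by
  refine Matching.isSome_μw_of_subset (fun v hv => ?_) (fun m hm => ?_) hw
  · obtain ⟨p, hp⟩ := Option.isSome_iff_exists.mp hv
    have hp' := (μ'.consistent p v).mpr hp
    by_contra hnone
    have hvp : I.wPref v p (μ.μw v) := by
      rw [Option.not_isSome_iff_eq_none.mp hnone]
      exact hacc p v hp'
    exact hs.not_wPref_of_mWeak hweak hp' hvp
  · rcases hweak m with heq | ⟨v, hv, _⟩
    · rwa [heq]
    · rw [hv]; rfl

theorem μw_eq_of_mWeak [Finite M] [Finite W] (hs : IsStable I μ)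
    (hweak : ∀ m, I.mWeak m (μ'.μm m) (μ.μm m))
    (hacc : ∀ m w, μ'.μm m = some w → m ∈ I.wpref w) {w : W} {m : M} (hw : μ.μw w = some m)
    (hbound : ∀ p, μ'.μw w = some p → I.wWeak w (some p) (some m)) : μ'.μw w = some m := by
  have hmatched : (μ'.μw w).isSome := hs.isSome_μw_of_mWeak hweak hacc (by rw [hw]; rfl)
  obtain ⟨p, hp⟩ := Option.isSome_iff_exists.mp hmatched
  rcases hbound p hp with heq | ⟨p', hpp', hwp⟩
  · rw [hp, heq]
  · rw [← Option.some_injective _ hpp', ← hw] at hwp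
    exact (hs.not_wPref_of_mWeak hweak ((μ'.consistent p w).mpr hp) hwp).elim

end IsStable

/-- if each manipulator truncates her true list right below her
women-optimal stable partner, then in the men-optimal stable matching of the
reported profile every manipulator gets her women-optimal stable partner. -/
theorem trunc_at_woptimal {M W : Type*} [DecidableEq M] [DecidableEq W]
    [Fintype M] [Fintype W] (I I' : SMInstance M W) (L : Set W) (μW μ' : Matching M W)
    (hG : GeneralManip I I' L) (hW : IsWomenOptimal I μW)
    (htrunc : ∀ w ∈ L, ∃ m, μW.μw w = some m ∧
      I'.wpref w = (I.wpref w).take ((I.wpref w).idxOf m + 1))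
    (hopt : IsMenOptimal I' μ') :
    ∀ w ∈ L, μ'.μw w = μW.μw w := by
  have hT : TruncManip I I' L := ⟨hG, fun w hw => by
    obtain ⟨m, -, htake⟩ := htrunc w hw
    exact htake ▸ take_prefix _ _⟩
  have hstable' : IsStable I' μW := hW.1.of_isPrefix hG.1 hT.wpref_isPrefix
    (hW.1.1.mem_wpref_of_truncate hG.2 htrunc)
  have hweak : ∀ m, I.mWeak m (μ'.μm m) (μW.μm m) :=
    SMInstance.mWeak_eq_of_mpref_eq hG.1 ▸ hopt.2 μW hstable'
  have hacc : ∀ m w, μ'.μm m = some w → m ∈ I.wpref w :=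
    fun m w h => (hT.wpref_isPrefix w).subset (hopt.1.1 m w h).2
  intro w hw
  obtain ⟨m, hm, htake⟩ := htrunc w hw
  rw [hm]
  refine hW.1.μw_eq_of_mWeak hweak hacc hm fun p hp => ?_
  have hp' : p ∈ I'.wpref w := (hopt.1.1 p w ((μ'.consistent p w).mpr hp)).2
  exact SMInstance.wWeak_of_mem_take (htake ▸ hp')
end
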